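/- arXiv:2205.07345 — 2 statements merged into one kernel-verified Lean document; each statement's English description precedes it below -/
import Mathlib

section
/- The function x₁ ↦ exp(x₁) + 1.2·exp(1 - x₁) on the interval [0,1] attains its maximum at x₁ = 0, and also has a local maximum at x₁ = 1 (i.e., its value at 1 exceeds its values in a left neighborhood of 1); in particular it is not unimodal on [0,1]. -/
open Real Set

/-!
Substituting `t = exp x` turns the function into `t + k / t` with `k = 1.2 * e`. Since
`t + k / t - (s + k / s) = (t - s) (s t - k) / (s t)`, this map decreases between `s` and `t`
when `s t ≤ k` and increases when `s t > k`. On `[0, 1]` the variable `t` ranges over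
`[1, e]`: as `1 · t ≤ e < k` the value at `t = 1` is the maximum, while `t · e > k` as soon
as `t > 1.2`, so the function increases towards `t = e`.
-/

section AddDiv

variable {s t k : ℝ}

theorem add_div_sub_add_div (hs : s ≠ 0) (ht : t ≠ 0) :
    t + k / t - (s + k / s) = (t - s) * (s * t - k) / (s * t) := by
  field_simp
  ring

theorem add_div_le_add_div_of_mul_le (hs : 0 < s) (hst : s ≤ t) (hk : s * t ≤ k) :
    t + k / t ≤ s + k / s := by
  have ht : 0 < t := hs.trans_le hst
  rw [← sub_nonpos, add_div_sub_add_div hs.ne' ht.ne']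
  exact div_nonpos_of_nonpos_of_nonneg
    (mul_nonpos_of_nonneg_of_nonpos (sub_nonneg.2 hst) (sub_nonpos.2 hk)) (by positivity)

theorem add_div_lt_add_div_of_lt_mul (hs : 0 < s) (hst : s < t) (hk : k < s * t) :
    s + k / s < t + k / t := by
  have ht : 0 < t := hs.trans hst
  rw [← sub_pos, add_div_sub_add_div hs.ne' ht.ne']
  exact div_pos (mul_pos (sub_pos.2 hst) (sub_pos.2 hk)) (by positivity)

end AddDiv

theorem exp_add_mul_exp_one_sub (c x : ℝ) :
    exp x + c * exp (1 - x) = exp x + c * exp 1 / exp x := by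
  rw [exp_sub, mul_div_assoc]

/-- The function `g x = exp x + 1.2 * exp (1 - x)` on `[0,1]` attains its maximum at `0`,
and also has a local maximum at `1` (its value at `1` exceeds its values in a left
neighborhood of `1`). -/
theorem arum_cost_not_unimodal :
    (∀ x ∈ Icc (0:ℝ) 1,
        Real.exp x + 1.2 * Real.exp (1 - x) ≤ Real.exp 0 + 1.2 * Real.exp (1 - 0)) ∧
    (∃ δ > (0:ℝ), ∀ x ∈ Icc (0:ℝ) 1, 1 - δ < x → x < 1 →
        Real.exp x + 1.2 * Real.exp (1 - x) < Real.exp 1 + 1.2 * Real.exp (1 - 1)) := by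
  simp only [exp_add_mul_exp_one_sub]
  refine ⟨fun x ⟨hx0, hx1⟩ => ?_, ⟨4 / 5, by norm_num, fun x _ hδx hx1 => ?_⟩⟩
  · refine add_div_le_add_div_of_mul_le (exp_pos 0) (exp_le_exp.2 hx0) ?_
    have : exp x ≤ exp 1 := exp_le_exp.2 hx1
    rw [exp_zero, one_mul]
    linarith [exp_pos 1]
  · refine add_div_lt_add_div_of_lt_mul (exp_pos x) (exp_lt_exp.2 hx1) ?_
    have : 1.2 < exp x := by linarith [add_one_le_exp x]
    nlinarith [exp_pos 1]
end

section
/- Suppose for each i in a finite set S, the total budget C satisfies C ≥ Σ_{i∈S} Uᵢ. Then Φ(y) = max_{x ∈ X(y)} f(y,x) with f(y,x) = Σₙ qₙ(Σᵢ yᵢ(aₙᵢxᵢ + bₙᵢ))/(Uₙᶜ + Σᵢ yᵢ(aₙᵢxᵢ + bₙᵢ)) and X(y) = {x ≥ 0 : Σᵢ xᵢ ≤ C, yᵢLᵢ ≤ xᵢ ≤ yᵢUᵢ} is monotone increasing in y, i.e., if y ≤ y' componentwise (both in {0,1}ᵐ) then Φ(y) ≤ Φ(y'). -/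
open Set Finset

/-! Opening every facility of `y'` at its upper bound `Uᵢ` is feasible because `C ≥ Σᵢ Uᵢ`, and it
is optimal for `y'`: no customer class `n` can get a larger total utility `vₙ` than this allocation
gives, and each share `qₙ vₙ / (Uᶜₙ + vₙ)` is increasing in `vₙ ≥ 0`. Since `y ≤ y'`, the same
allocation also dominates every feasible allocation for `y`. -/

lemma div_add_self_le_div_add_self {c s t : ℝ} (hc : 0 < c) (hs : 0 ≤ s) (hst : s ≤ t) :
    s / (c + s) ≤ t / (c + t) := by
  rw [div_le_div_iff₀ (by linarith) (by linarith)]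
  nlinarith

lemma sum_mul_div_add_le_sum_mul_div_add {ι : Type*} [Fintype ι] {q c v w : ι → ℝ}
    (hq : ∀ n, 0 ≤ q n) (hc : ∀ n, 0 < c n) (hv : ∀ n, 0 ≤ v n) (hvw : ∀ n, v n ≤ w n) :
    ∑ n, q n * v n / (c n + v n) ≤ ∑ n, q n * w n / (c n + w n) := by
  refine sum_le_sum fun n _ => ?_
  simp only [mul_div_assoc]
  exact mul_le_mul_of_nonneg_left (div_add_self_le_div_add_self (hc n) (hv n) (hvw n)) (hq n)

lemma mul_add_le_mul_add_of_binary {r r' x u a b : ℝ} (hr : r = 0 ∨ r = 1)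
    (hr' : r' = 0 ∨ r' = 1) (hrr' : r ≤ r') (hx : x ≤ r * u) (hu : 0 ≤ u) (ha : 0 ≤ a)
    (hb : 0 ≤ b) : r * (a * x + b) ≤ r' * (a * (r' * u) + b) := by
  rcases hr with rfl | rfl <;> rcases hr' with rfl | rfl
  · simp
  · simpa using add_nonneg (mul_nonneg ha hu) hb
  · norm_num at hrr'
  · simpa using mul_le_mul_of_nonneg_left (by simpa using hx) ha

/-- If the budget is large enough (`C ≥ Σᵢ Uᵢ`), then the optimal-value function
`Φ(y) = sup_{x ∈ X(y)} f(y,x)` of the joint MRUM problem is monotone increasing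
in the binary location vector `y`. -/
theorem phi_monotone_of_large_budget (ι : Type*) [Fintype ι] (m : ℕ)
    (q Uc : ι → ℝ) (a b : ι → Fin m → ℝ) (L U : Fin m → ℝ) (C : ℝ)
    (hq : ∀ n, 0 < q n) (hUc : ∀ n, 0 < Uc n)
    (ha : ∀ n i, 0 ≤ a n i) (hb : ∀ n i, 0 ≤ b n i)
    (hL : ∀ i, 0 ≤ L i) (hLU : ∀ i, L i ≤ U i)
    (hC : (∑ i, U i) ≤ C) :
    let f : (Fin m → ℝ) → (Fin m → ℝ) → ℝ := fun y x =>
      ∑ n, q n * (∑ i, y i * (a n i * x i + b n i)) /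
        (Uc n + ∑ i, y i * (a n i * x i + b n i))
    let X : (Fin m → ℝ) → Set (Fin m → ℝ) := fun y =>
      {x | (∀ i, 0 ≤ x i) ∧ (∑ i, x i) ≤ C ∧
        ∀ i, y i * L i ≤ x i ∧ x i ≤ y i * U i}
    let Φ : (Fin m → ℝ) → ℝ := fun y => sSup (f y '' X y)
    ∀ y y' : Fin m → ℝ, (∀ i, y i = 0 ∨ y i = 1) → (∀ i, y' i = 0 ∨ y' i = 1) →
      (∀ i, y i ≤ y' i) → Φ y ≤ Φ y' := by
  intro f X Φ y y' hy hy' hyy'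
  have hU : ∀ i, 0 ≤ U i := fun i => (hL i).trans (hLU i)
  have full_mem : ∀ z : Fin m → ℝ, (∀ i, z i = 0 ∨ z i = 1) → (fun i => z i * U i) ∈ X z := by
    intro z hz
    have hz01 : ∀ i, 0 ≤ z i ∧ z i ≤ 1 := fun i => by rcases hz i with h | h <;> simp [h]
    refine ⟨fun i => mul_nonneg (hz01 i).1 (hU i), ?_, fun i => ⟨?_, le_rfl⟩⟩
    · exact (sum_le_sum fun i _ => mul_le_of_le_one_left (hU i) (hz01 i).2).trans hC
    · exact mul_le_mul_of_nonneg_left (hLU i) (hz01 i).1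
  have full_dominates : ∀ z z' : Fin m → ℝ, (∀ i, z i = 0 ∨ z i = 1) →
      (∀ i, z' i = 0 ∨ z' i = 1) → (∀ i, z i ≤ z' i) →
      ∀ x ∈ X z, f z x ≤ f z' (fun i => z' i * U i) := by
    intro z z' hz hz' hzz' x ⟨hx0, _, hxLU⟩
    refine sum_mul_div_add_le_sum_mul_div_add (fun n => (hq n).le) hUc (fun n => ?_)
      (fun n => sum_le_sum fun i _ => mul_add_le_mul_add_of_binary (hz i) (hz' i) (hzz' i)
        (hxLU i).2 (hU i) (ha n i) (hb n i))
    refine sum_nonneg fun i _ => mul_nonneg ?_ (by nlinarith [hx0 i, ha n i, hb n i])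
    rcases hz i with h | h <;> simp [h]
  have hmax : IsGreatest (f y' '' X y') (f y' (fun i => y' i * U i)) :=
    ⟨mem_image_of_mem _ (full_mem y' hy'),
      forall_mem_image.2 (full_dominates y' y' hy' hy' fun _ => le_rfl)⟩
  calc Φ y ≤ f y' (fun i => y' i * U i) :=
        csSup_le ((nonempty_of_mem (full_mem y hy)).image _)
          (forall_mem_image.2 (full_dominates y y' hy hy' hyy'))
    _ = Φ y' := hmax.csSup_eq.symm
end
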